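/- arXiv:2110.03720 — 2 statements merged into one kernel-verified Lean document; each statement's English description precedes it below -/
import Mathlib

section
/- Let 𝒳, 𝒴 be standard Borel spaces and Q : 𝒳 → 𝒫(𝒴) a measurement kernel. Suppose that for every continuous bounded f : 𝒳 → ℝ and every ε > 0 there is a bounded measurable g : 𝒴 → ℝ with sup_x |f(x) − ∫ g(y) Q(dy|x)| < ε (one-step observability). Let (πₙ), (σₙ) be sequences of probability measures on 𝒳 such that the induced measurement predictions merge in total variation: ‖∫Q(·|x)πₙ(dx) − ∫Q(·|x)σₙ(dx)‖_TV → 0. Then πₙ and σₙ merge weakly: for every continuous bounded f, ∫f dπₙ − ∫f dσₙ → 0. -/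
/-!
Given a bounded continuous `f` and `ε > 0`, observability yields a bounded measurable `g` on `Y`
whose `Q`-average `G x = ∫ g dQ(·|x)` is uniformly `ε / 2`-close to `f`. Integrating against `πₙ`
and `σₙ`, the gap `∫ f dπₙ - ∫ f dσₙ` is within `ε` of `∫ G dπₙ - ∫ G dσₙ`, which is the
difference of the integrals of `g` against the two predicted measurement laws and is therefore
bounded by `sup |g|` times their total variation distance, a quantity tending to `0`.
-/

open MeasureTheory ProbabilityTheory Filter Topology

lemma tendsto_zero_of_forall_exists_abs_sub_le {ι : Type*} {l : Filter ι} {a : ι → ℝ}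
    (h : ∀ ε > 0, ∃ b : ι → ℝ, Tendsto b l (𝓝 0) ∧ ∀ i, |a i - b i| ≤ ε) :
    Tendsto a l (𝓝 0) := by
  refine Metric.tendsto_nhds.2 fun ε hε => ?_
  obtain ⟨b, hb, hab⟩ := h (ε / 2) (half_pos hε)
  filter_upwards [Metric.tendsto_nhds.1 hb (ε / 2) (half_pos hε)] with i hi
  rw [Real.dist_eq, sub_zero] at hi ⊢
  linarith [abs_sub_abs_le_abs_sub (a i) (b i), hab i]

section BoundedMeasurable

variable {α : Type*} [MeasurableSpace α] {g : α → ℝ} {C : ℝ}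

lemma integrable_of_abs_le (μ : Measure α) [IsFiniteMeasure μ] (hg : AEStronglyMeasurable g μ)
    (hC : ∀ x, |g x| ≤ C) : Integrable g μ :=
  .of_bound hg C (ae_of_all _ hC)

lemma abs_integral_le_of_abs_le (μ : Measure α) [IsProbabilityMeasure μ] (hC : ∀ x, |g x| ≤ C) :
    |∫ x, g x ∂μ| ≤ C := by
  simpa using norm_integral_le_of_norm_le_const (μ := μ) (f := g) (ae_of_all _ hC)

lemma abs_integral_sub_integral_le_of_abs_sub_le (μ : Measure α) [IsProbabilityMeasure μ]
    {f : α → ℝ} {δ : ℝ} (hf : Integrable f μ) (hg : Integrable g μ)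
    (hfg : ∀ x, |f x - g x| ≤ δ) :
    |∫ x, f x ∂μ - ∫ x, g x ∂μ| ≤ δ := by
  rw [← integral_sub hf hg]
  exact abs_integral_le_of_abs_le μ hfg

lemma abs_integral_sub_integral_le_mul_totalVariation (μ ν : Measure α)
    [IsFiniteMeasure μ] [IsFiniteMeasure ν] (hg : Measurable g) (hC : ∀ y, |g y| ≤ C) :
    |∫ y, g y ∂μ - ∫ y, g y ∂ν| ≤
      C * ((μ.toSignedMeasure - ν.toSignedMeasure).totalVariation Set.univ).toReal := by
  set s := μ.toSignedMeasure - ν.toSignedMeasure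
  set p := s.toJordanDecomposition.posPart
  set q := s.toJordanDecomposition.negPart
  have hint (ρ : Measure α) [IsFiniteMeasure ρ] : Integrable g ρ :=
    integrable_of_abs_le ρ hg.aestronglyMeasurable hC
  have hbound (ρ : Measure α) [IsFiniteMeasure ρ] : |∫ y, g y ∂ρ| ≤ C * (ρ Set.univ).toReal := by
    simpa [Measure.real] using norm_integral_le_of_norm_le_const (μ := ρ) (f := g) (ae_of_all _ hC)
  -- the Jordan decomposition `μ - ν = p - q`, rearranged into an identity of measures
  have hsum : μ + q = ν + p := by
    rw [← Measure.toSignedMeasure_eq_toSignedMeasure_iff, Measure.toSignedMeasure_add,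
      Measure.toSignedMeasure_add]
    have hjordan : p.toSignedMeasure - q.toSignedMeasure = s :=
      s.toSignedMeasure_toJordanDecomposition
    rw [add_comm ν.toSignedMeasure, ← sub_eq_sub_iff_add_eq_add, hjordan]
  have hsplit : ∫ y, g y ∂μ - ∫ y, g y ∂ν = ∫ y, g y ∂p - ∫ y, g y ∂q := by
    have h := congrArg (fun ρ => ∫ y, g y ∂ρ) hsum
    simp only [integral_add_measure (hint _) (hint _)] at h
    linarith
  have htv : (s.totalVariation Set.univ).toReal = (p Set.univ).toReal + (q Set.univ).toReal := by
    rw [SignedMeasure.totalVariation, Measure.add_apply,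
      ENNReal.toReal_add (measure_ne_top _ _) (measure_ne_top _ _)]
  rw [hsplit, htv, mul_add]
  exact (abs_sub _ _).trans (add_le_add (hbound p) (hbound q))

lemma tendsto_integral_sub_integral_of_tendsto_totalVariation {ι : Type*} {l : Filter ι}
    (μ ν : ι → Measure α) [∀ i, IsFiniteMeasure (μ i)] [∀ i, IsFiniteMeasure (ν i)]
    (hg : Measurable g) (hC : ∀ y, |g y| ≤ C)
    (hTV : Tendsto (fun i => ((μ i).toSignedMeasure - (ν i).toSignedMeasure).totalVariation
      Set.univ) l (𝓝 0)) :
    Tendsto (fun i => ∫ y, g y ∂μ i - ∫ y, g y ∂ν i) l (𝓝 0) := by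
  have hTV' : Tendsto (fun i => C * (((μ i).toSignedMeasure - (ν i).toSignedMeasure).totalVariation
      Set.univ).toReal) l (𝓝 0) := by
    simpa using ((ENNReal.tendsto_toReal ENNReal.zero_ne_top).comp hTV).const_mul C
  refine squeeze_zero_norm (fun i => ?_) hTV'
  exact abs_integral_sub_integral_le_mul_totalVariation _ _ hg hC

end BoundedMeasurable

lemma integral_integral_kernel_eq_integral_snd_compProd {X Y : Type*} [MeasurableSpace X]
    [MeasurableSpace Y] (μ : Measure X) [IsFiniteMeasure μ] (Q : Kernel X Y) [IsFiniteKernel Q]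
    {g : Y → ℝ} {C : ℝ} (hg : Measurable g) (hC : ∀ y, |g y| ≤ C) :
    ∫ x, ∫ y, g y ∂Q x ∂μ = ∫ y, g y ∂(μ.compProd Q).snd := by
  have hint : Integrable (fun z : X × Y => g z.2) (μ.compProd Q) :=
    integrable_of_abs_le _ (hg.comp measurable_snd).aestronglyMeasurable fun z => hC z.2
  rw [Measure.snd, integral_map measurable_snd.aemeasurable hg.aestronglyMeasurable,
    Measure.integral_compProd hint]

theorem one_step_observability_implies_weak_merging_general
    {X Y : Type*} [MeasurableSpace X] [TopologicalSpace X] [BorelSpace X]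
    [MeasurableSpace Y]
    (Q : ProbabilityTheory.Kernel X Y) [ProbabilityTheory.IsMarkovKernel Q]
    (hobs : ∀ f : BoundedContinuousFunction X ℝ, ∀ ε > (0 : ℝ),
      ∃ g : Y → ℝ, Measurable g ∧ (∃ C, ∀ y, |g y| ≤ C) ∧
        ∀ x, |f x - ∫ y, g y ∂(Q x)| < ε)
    (π σ : ℕ → Measure X)
    (hπ : ∀ n, IsProbabilityMeasure (π n)) (hσ : ∀ n, IsProbabilityMeasure (σ n))
    (hTV : Filter.Tendsto
      (fun n => ((((π n).compProd Q).snd).toSignedMeasure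
        - (((σ n).compProd Q).snd).toSignedMeasure).totalVariation Set.univ)
      Filter.atTop (nhds 0)) :
    ∀ f : BoundedContinuousFunction X ℝ,
      Filter.Tendsto (fun n => ∫ x, f x ∂(π n) - ∫ x, f x ∂(σ n))
        Filter.atTop (nhds 0) := by
  intro f
  refine tendsto_zero_of_forall_exists_abs_sub_le fun ε hε => ?_
  obtain ⟨g, hg, ⟨C, hC⟩, hfg⟩ := hobs f (ε / 2) (half_pos hε)
  set G : X → ℝ := fun x => ∫ y, g y ∂Q x
  have hG (μ : Measure X) [IsProbabilityMeasure μ] : Integrable G μ :=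
    integrable_of_abs_le μ (hg.stronglyMeasurable.integral_kernel).aestronglyMeasurable
      fun x => abs_integral_le_of_abs_le (Q x) hC
  have hfG (μ : Measure X) [IsProbabilityMeasure μ] :
      |∫ x, f x ∂μ - ∫ x, G x ∂μ| ≤ ε / 2 :=
    abs_integral_sub_integral_le_of_abs_sub_le μ (f.integrable μ) (hG μ) fun x => (hfg x).le
  refine ⟨fun n => ∫ x, G x ∂π n - ∫ x, G x ∂σ n, ?_, fun n => ?_⟩
  · simp only [G, integral_integral_kernel_eq_integral_snd_compProd _ Q hg hC]
    exact tendsto_integral_sub_integral_of_tendsto_totalVariation _ _ hg hC hTV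
  · have hπn := hfG (π n)
    have hσn := hfG (σ n)
    rw [abs_le] at hπn hσn ⊢
    constructor <;> linarith

theorem one_step_observability_implies_weak_merging
    {X Y : Type*} [MeasurableSpace X] [TopologicalSpace X] [BorelSpace X] [PolishSpace X]
    [MeasurableSpace Y] [TopologicalSpace Y] [BorelSpace Y] [PolishSpace Y]
    (Q : ProbabilityTheory.Kernel X Y) [ProbabilityTheory.IsMarkovKernel Q]
    (hobs : ∀ f : BoundedContinuousFunction X ℝ, ∀ ε > (0 : ℝ),
      ∃ g : Y → ℝ, Measurable g ∧ (∃ C, ∀ y, |g y| ≤ C) ∧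
        ∀ x, |f x - ∫ y, g y ∂(Q x)| < ε)
    (π σ : ℕ → Measure X)
    (hπ : ∀ n, IsProbabilityMeasure (π n)) (hσ : ∀ n, IsProbabilityMeasure (σ n))
    (hTV : Filter.Tendsto
      (fun n => ((((π n).compProd Q).snd).toSignedMeasure
        - (((σ n).compProd Q).snd).toSignedMeasure).totalVariation Set.univ)
      Filter.atTop (nhds 0)) :
    ∀ f : BoundedContinuousFunction X ℝ,
      Filter.Tendsto (fun n => ∫ x, f x ∂(π n) - ∫ x, f x ∂(σ n))
        Filter.atTop (nhds 0) :=
  one_step_observability_implies_weak_merging_general Q hobs π σ hπ hσ hTV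
end

section
/- Let T(dx₁|x, u) = t(x₁, x, u) φ(dx₁) be a transition kernel with density t with respect to a σ-finite measure φ, where t(x₁, ·, u) is continuous in x for every x₁ and u, and t is φ-integrable appropriately. Fix u. If a sequence of probability measures πᵐ converges weakly to π on 𝒳, then the predicted measures ∫ T(·|x, u) πᵐ(dx) converge to ∫ T(·|x, u) π(dx) in total variation. -/
/-!
Each predicted measure `∫ T(·|x, u) μ(dx)` is a probability measure with `φ`-density
`x₁ ↦ ∫ t(x₁, x, u) μ(dx)` (Tonelli). Since `x ↦ t(x₁, x, u)` is bounded and continuous, weak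
convergence `πᵐ → π` gives pointwise convergence of these densities, and Scheffé's lemma upgrades
pointwise convergence of probability densities to `L¹(φ)`-convergence.
-/

open MeasureTheory Filter Topology

section Scheffe

variable {α ι : Type*} [MeasurableSpace α] {μ : Measure α} {l : Filter ι}
  [l.IsCountablyGenerated] {F : ι → α → ℝ} {f : α → ℝ}

/-- Scheffé's lemma. -/
theorem tendsto_integral_abs_sub_of_tendsto_of_integral_eq (hF0 : ∀ n, 0 ≤ᵐ[μ] F n)
    (hFi : ∀ n, Integrable (F n) μ) (hf : Integrable f μ)
    (hF_int : ∀ n, ∫ a, F n a ∂μ = ∫ a, f a ∂μ)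
    (hlim : ∀ᵐ a ∂μ, Tendsto (fun n => F n a) l (𝓝 (f a))) :
    Tendsto (fun n => ∫ a, |F n a - f a| ∂μ) l (𝓝 0) := by
  -- `|F - f| = 2 (f - F)⁺ - (f - F)`, the last term has integral `0`, and `0 ≤ (f - F)⁺ ≤ |f|`.
  have habs (a b : ℝ) : |b - a| = 2 * max (a - b) 0 - (a - b) := by
    rcases le_total a b with h | h
    · rw [abs_of_nonneg (sub_nonneg.2 h), max_eq_right (sub_nonpos.2 h)]; ring
    · rw [abs_of_nonpos (sub_nonpos.2 h), max_eq_left (sub_nonneg.2 h)]; ring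
  have hpos_int : ∀ n, Integrable (fun a => max (f a - F n a) 0) μ :=
    fun n => (hf.sub (hFi n)).pos_part
  have hintegral : ∀ n, ∫ a, |F n a - f a| ∂μ = 2 * ∫ a, max (f a - F n a) 0 ∂μ := by
    intro n
    simp_rw [habs (f _)]
    have hdiff : Integrable (fun a => f a - F n a) μ := hf.sub (hFi n)
    rw [integral_sub ((hpos_int n).const_mul 2) hdiff, integral_const_mul,
      integral_sub hf (hFi n), hF_int, sub_self, sub_zero]
  have hpos_tendsto : Tendsto (fun n => ∫ a, max (f a - F n a) 0 ∂μ) l (𝓝 0) := by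
    have := tendsto_integral_filter_of_dominated_convergence (fun a => |f a|)
      (Eventually.of_forall fun n => (hpos_int n).aestronglyMeasurable)
      (Eventually.of_forall fun n => (hF0 n).mono fun a ha => by
        rw [Real.norm_eq_abs, abs_of_nonneg (le_max_right _ _)]
        have : (0 : ℝ) ≤ F n a := ha
        exact max_le (by linarith [le_abs_self (f a)]) (abs_nonneg _))
      hf.abs (hlim.mono fun a ha => by
        simpa using (ha.const_sub (f a)).max (tendsto_const_nhds (x := (0 : ℝ))))
    simpa using this
  simpa [hintegral] using hpos_tendsto.const_mul 2

end Scheffe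
open MeasureTheory

section MixtureDensity

variable {α β : Type*} [MeasurableSpace α] [MeasurableSpace β] {φ : Measure α} [SFinite φ]
  {μ : Measure β} [IsProbabilityMeasure μ] {k : α → β → ℝ}

theorem lintegral_ofReal_integral_eq_one_of_lintegral_eq_one (hk0 : ∀ a b, 0 ≤ k a b)
    (hk : Measurable (Function.uncurry k)) (hki : ∀ a, Integrable (k a) μ)
    (hk1 : ∀ b, ∫⁻ a, ENNReal.ofReal (k a b) ∂φ = 1) :
    ∫⁻ a, ENNReal.ofReal (∫ b, k a b ∂μ) ∂φ = 1 := by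
  calc ∫⁻ a, ENNReal.ofReal (∫ b, k a b ∂μ) ∂φ
      = ∫⁻ a, ∫⁻ b, ENNReal.ofReal (k a b) ∂μ ∂φ := by
        congr with a
        exact ofReal_integral_eq_lintegral_ofReal (hki a) (Eventually.of_forall (hk0 a))
    _ = ∫⁻ b, ∫⁻ a, ENNReal.ofReal (k a b) ∂φ ∂μ :=
        lintegral_lintegral_swap (ENNReal.measurable_ofReal.comp hk).aemeasurable
    _ = 1 := by simp [hk1]

theorem integrable_integral_of_lintegral_eq_one (hk0 : ∀ a b, 0 ≤ k a b)
    (hk : Measurable (Function.uncurry k)) (hki : ∀ a, Integrable (k a) μ)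
    (hk1 : ∀ b, ∫⁻ a, ENNReal.ofReal (k a b) ∂φ = 1) :
    Integrable (fun a => ∫ b, k a b ∂μ) φ := by
  refine ⟨hk.stronglyMeasurable.integral_prod_right'.aestronglyMeasurable, ?_⟩
  rw [hasFiniteIntegral_iff_ofReal (Eventually.of_forall fun a => integral_nonneg (hk0 a)),
    lintegral_ofReal_integral_eq_one_of_lintegral_eq_one hk0 hk hki hk1]
  exact ENNReal.one_lt_top

theorem integral_integral_eq_one_of_lintegral_eq_one (hk0 : ∀ a b, 0 ≤ k a b)
    (hk : Measurable (Function.uncurry k)) (hki : ∀ a, Integrable (k a) μ)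
    (hk1 : ∀ b, ∫⁻ a, ENNReal.ofReal (k a b) ∂φ = 1) :
    ∫ a, ∫ b, k a b ∂μ ∂φ = 1 := by
  rw [integral_eq_lintegral_of_nonneg_ae (Eventually.of_forall fun a => integral_nonneg (hk0 a))
    hk.stronglyMeasurable.integral_prod_right'.aestronglyMeasurable,
    lintegral_ofReal_integral_eq_one_of_lintegral_eq_one hk0 hk hki hk1, ENNReal.toReal_one]

end MixtureDensity

theorem time_update_tv_continuous
    {X U : Type*} [MeasurableSpace X] [TopologicalSpace X] [BorelSpace X] [PolishSpace X]
    (φ : Measure X) [SigmaFinite φ] (t : X → X → U → ℝ)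
    (ht0 : ∀ x₁ x u, 0 ≤ t x₁ x u)
    (htmeas : ∀ x u, Measurable (fun x₁ => t x₁ x u))
    (htc : ∀ x₁ u, Continuous (fun x => t x₁ x u))
    (htb : ∀ x₁ u, ∃ C, ∀ x, t x₁ x u ≤ C)
    (hti : ∀ x u, ∫⁻ x₁, ENNReal.ofReal (t x₁ x u) ∂φ = 1)
    (u : U) (πm : ℕ → Measure X) (π : Measure X)
    [∀ m, IsProbabilityMeasure (πm m)] [IsProbabilityMeasure π]
    (hconv : ∀ f : BoundedContinuousFunction X ℝ,
      Filter.Tendsto (fun m => ∫ x, f x ∂(πm m)) Filter.atTop (nhds (∫ x, f x ∂π))) :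
    Filter.Tendsto
      (fun m => ∫ x₁, |(∫ x, t x₁ x u ∂(πm m)) - ∫ x, t x₁ x u ∂π| ∂φ)
      Filter.atTop (nhds 0) := by
  have hk : Measurable (Function.uncurry fun x₁ x => t x₁ x u) :=
    (measurable_uncurry_of_continuous_of_measurable (fun x₁ => htc x₁ u)
      (fun x => htmeas x u)).comp measurable_swap
  have hbcf (x₁ : X) : ∃ g : BoundedContinuousFunction X ℝ, ⇑g = fun x => t x₁ x u := by
    obtain ⟨C, hC⟩ := htb x₁ u
    refine ⟨.ofNormedAddCommGroup _ (htc x₁ u) C fun x => ?_, rfl⟩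
    rw [Real.norm_eq_abs, abs_of_nonneg (ht0 x₁ x u)]
    exact hC x
  choose g hg using hbcf
  have hki (μ : Measure X) [IsFiniteMeasure μ] (x₁ : X) : Integrable (fun x => t x₁ x u) μ :=
    hg x₁ ▸ (g x₁).integrable μ
  have hk0 (x₁ x : X) : 0 ≤ t x₁ x u := ht0 x₁ x u
  have hk1 (x : X) : ∫⁻ x₁, ENNReal.ofReal (t x₁ x u) ∂φ = 1 := hti x u
  refine tendsto_integral_abs_sub_of_tendsto_of_integral_eq
    (fun m => Eventually.of_forall fun x₁ => integral_nonneg (hk0 x₁))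
    (fun m => integrable_integral_of_lintegral_eq_one hk0 hk (hki _) hk1)
    (integrable_integral_of_lintegral_eq_one hk0 hk (hki _) hk1) (fun m => ?_)
    (Eventually.of_forall fun x₁ => by simpa [hg] using hconv (g x₁))
  rw [integral_integral_eq_one_of_lintegral_eq_one hk0 hk (hki _) hk1,
    integral_integral_eq_one_of_lintegral_eq_one hk0 hk (hki _) hk1]
end
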